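/- arXiv:2511.03887 — 2 statements merged into one kernel-verified Lean document; each statement's English description precedes it below -/
import Mathlib

section
/- Let G be a topological group and A ⊆ G. Then A is coarsely bounded in G if and only if for every sequence (U_n)_{n ∈ ℕ} of open subsets of G satisfying U_n ⊆ U_{n+1}, U_n · U_n ⊆ U_{n+1} for all n, and ⋃_{n ∈ ℕ} U_n = G, there exists n with A ⊆ U_n. -/
open Pointwise

/-- A continuous, left-invariant pseudometric on a topological group `G`. -/
structure IsContLeftInvPseudometric (G : Type*) [Group G] [TopologicalSpace G]
    (d : G → G → ℝ) : Prop where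
  continuous : Continuous fun p : G × G => d p.1 p.2
  self : ∀ x : G, d x x = 0
  symm : ∀ x y : G, d x y = d y x
  nonneg : ∀ x y : G, 0 ≤ d x y
  triangle : ∀ x y z : G, d x z ≤ d x y + d y z
  left_inv : ∀ g x y : G, d (g * x) (g * y) = d x y

/-- A subset `A` of a topological group `G` is coarsely bounded in `G` if it has
finite diameter with respect to every continuous left-invariant pseudometric on `G`. -/
def IsCoarselyBounded (G : Type*) [Group G] [TopologicalSpace G] (A : Set G) : Prop :=
  ∀ d : G → G → ℝ, IsContLeftInvPseudometric G d →
    ∃ M : ℝ, ∀ a ∈ A, ∀ b ∈ A, d a b ≤ M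

/-- The word length of `g` with respect to a generating set `S`: the least `n` such
that `g` is a product of `n` elements of `S`. -/
noncomputable def wordLength {G : Type*} [Group G] (S : Set G) (g : G) : ℕ :=
  sInf {n : ℕ | ∃ l : List G, l.length = n ∧ (∀ s ∈ l, s ∈ S) ∧ l.prod = g}

/-- `G` admits a geometry if there is a continuous left-invariant pseudometric on `G`
which dominates, in the coarse Lipschitz sense, every continuous left-invariant
pseudometric on `G`. -/
def AdmitsAGeometry (G : Type*) [Group G] [TopologicalSpace G] : Prop :=
  ∃ d : G → G → ℝ, IsContLeftInvPseudometric G d ∧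
    ∀ d' : G → G → ℝ, IsContLeftInvPseudometric G d' →
      ∃ L K : ℝ, 0 < L ∧ 0 ≤ K ∧ ∀ g h : G, d' g h ≤ L * d g h + K


/-!
If `d` is a continuous left-invariant pseudometric, the balls `{g | d 1 g < 2 ^ n}` form an
exhaustion of the required kind, so a set satisfying the exhaustion condition lies in one of them.

Conversely, an exhaustion `U n` can be thinned out to symmetric neighbourhoods `V k` of the
identity, indexed by `k ∈ ℤ`, with `V k * V k * V k ⊆ V (k + 1)`: the nonnegative indices come from
the `U n`, the negative ones from continuity of multiplication. As in the Birkhoff–Kakutani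
theorem, the largest pseudometric below `(x, y) ↦ 2 ^ min {k | x⁻¹ * y ∈ V k}` is continuous,
left-invariant and, by Frink's chain lemma, at least `2 ^ k` away from `V k`. A coarsely bounded set
therefore lies in some `V k`, hence in some `U n`.
-/

open Filter Topology NNReal

section Metric

variable {G : Type*} [Group G] [TopologicalSpace G]

namespace IsContLeftInvPseudometric

variable {d : G → G → ℝ}

theorem dist_one_mul_le (hd : IsContLeftInvPseudometric G d) (u v : G) :
    d 1 (u * v) ≤ d 1 u + d 1 v :=
  calc d 1 (u * v) ≤ d 1 u + d u (u * v) := hd.triangle 1 u (u * v)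
    _ = d 1 u + d 1 v := by rw [← hd.left_inv u 1 v, mul_one]

theorem dist_le_dist_one_add (hd : IsContLeftInvPseudometric G d) (a b : G) :
    d a b ≤ d 1 a + d 1 b := by
  simpa [hd.symm a 1] using hd.triangle a 1 b

theorem continuous_dist_one (hd : IsContLeftInvPseudometric G d) : Continuous (d 1) :=
  hd.continuous.comp (continuous_const.prodMk continuous_id)

end IsContLeftInvPseudometric

theorem isCoarselyBounded_of_forall_exhaustion {A : Set G}
    (hA : ∀ U : ℕ → Set G, (∀ n, IsOpen (U n)) → (∀ n, U n ⊆ U (n + 1)) →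
      (∀ n, ∀ u ∈ U n, ∀ v ∈ U n, u * v ∈ U (n + 1)) → (∀ g : G, ∃ n, g ∈ U n) →
      ∃ n, A ⊆ U n) :
    IsCoarselyBounded G A := by
  intro d hd
  let U : ℕ → Set G := fun n => {g | d 1 g < 2 ^ n}
  have hmono : ∀ n, U n ⊆ U (n + 1) := fun n g (hg : d 1 g < 2 ^ n) =>
    show d 1 g < 2 ^ (n + 1) from hg.trans_le (pow_le_pow_right₀ one_le_two n.le_succ)
  have hmul : ∀ n, ∀ u ∈ U n, ∀ v ∈ U n, u * v ∈ U (n + 1) :=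
    fun n u (hu : d 1 u < 2 ^ n) v (hv : d 1 v < 2 ^ n) =>
      show d 1 (u * v) < 2 ^ (n + 1) by linarith [hd.dist_one_mul_le u v, pow_succ (2 : ℝ) n]
  obtain ⟨n, hn⟩ := hA U (fun _ => isOpen_lt hd.continuous_dist_one continuous_const) hmono hmul
    (fun g => pow_unbounded_of_one_lt (d 1 g) one_lt_two)
  exact ⟨2 ^ n + 2 ^ n, fun a ha b hb =>
    (hd.dist_le_dist_one_add a b).trans (add_le_add (hn ha).le (hn hb).le)⟩

theorem PseudoMetricSpace.dist_ofPreNNDist_map_le {X : Type*} (D : X → X → ℝ≥0)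
    (dist_self : ∀ x, D x x = 0) (dist_comm : ∀ x y, D x y = D y x) {f : X → X}
    (hf : ∀ x y, D (f x) (f y) = D x y) (x y : X) :
    @dist X (@PseudoMetricSpace.toDist X (PseudoMetricSpace.ofPreNNDist D dist_self dist_comm))
        (f x) (f y) ≤
      @dist X (@PseudoMetricSpace.toDist X (PseudoMetricSpace.ofPreNNDist D dist_self dist_comm))
        x y := by
  rw [dist_ofPreNNDist, dist_ofPreNNDist, NNReal.coe_le_coe]
  refine le_ciInf fun l => (ciInf_le (OrderBot.bddBelow _) (l.map f)).trans_eq ?_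
  rw [show l.map f ++ [f y] = (l ++ [y]).map f by simp, ← List.map_cons, List.zipWith_map]
  simp only [hf]

theorem continuous_of_tendsto_dist_one [ContinuousMul G] {d : G → G → ℝ}
    (hsymm : ∀ x y, d x y = d y x) (htri : ∀ x y z, d x z ≤ d x y + d y z)
    (hinv : ∀ g x y, d (g * x) (g * y) = d x y) (h : Tendsto (d 1) (𝓝 1) (𝓝 0)) :
    Continuous fun p : G × G => d p.1 p.2 := by
  have hd : ∀ x y, d x y = d 1 (x⁻¹ * y) := fun x y => by rw [← hinv x⁻¹, inv_mul_cancel]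
  have hleft : ∀ x : G, Tendsto (fun y => d 1 (x⁻¹ * y)) (𝓝 x) (𝓝 0) := fun x =>
    h.comp (by simpa using (continuous_const.mul continuous_id).tendsto (f := (x⁻¹ * ·)) x)
  refine continuous_iff_continuousAt.2 fun ⟨x, y⟩ => tendsto_iff_dist_tendsto_zero.2 ?_
  have hsum := ((hleft x).comp (continuous_fst.tendsto (x, y))).add
    ((hleft y).comp (continuous_snd.tendsto (x, y)))
  rw [add_zero] at hsum
  refine squeeze_zero (fun _ => dist_nonneg) (fun p => ?_) hsum
  dsimp only [Function.comp_apply]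
  rw [Real.dist_eq, abs_sub_le_iff, ← hd, ← hd]
  constructor <;> linarith [htri p.1 x p.2, htri x y p.2, htri x p.1 y, htri p.1 p.2 y,
    hsymm x p.1, hsymm y p.2]

theorem exists_isContLeftInvPseudometric_of_weight [ContinuousMul G] (σ : G → ℝ≥0)
    (h1 : σ 1 = 0) (hinv : ∀ g, σ g⁻¹ = σ g)
    (hmul : ∀ a b c, σ (a * b * c) ≤ 2 * max (σ a) (max (σ b) (σ c)))
    (hσ : Tendsto σ (𝓝 1) (𝓝 0)) :
    ∃ d : G → G → ℝ, IsContLeftInvPseudometric G d ∧ ∀ g, (σ g : ℝ) ≤ 2 * d 1 g := by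
  let D : G → G → ℝ≥0 := fun x y => σ (x⁻¹ * y)
  have hself : ∀ x, D x x = 0 := by simp [D, h1]
  have hcomm : ∀ x y, D x y = D y x := fun x y => by
    simp only [D]
    rw [← hinv, mul_inv_rev, inv_inv]
  let m := PseudoMetricSpace.ofPreNNDist D hself hcomm
  let d : G → G → ℝ := @dist G m.toDist
  have hmap : ∀ g x y, d (g * x) (g * y) ≤ d x y := fun g =>
    PseudoMetricSpace.dist_ofPreNNDist_map_le D hself hcomm fun x y => by
      simp only [D, mul_inv_rev, mul_assoc, inv_mul_cancel_left]
  have hleft : ∀ g x y, d (g * x) (g * y) = d x y := fun g x y =>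
    (hmap g x y).antisymm (by simpa using hmap g⁻¹ (g * x) (g * y))
  have hle : ∀ g, d 1 g ≤ σ g := fun g =>
    (PseudoMetricSpace.dist_ofPreNNDist_le D hself hcomm 1 g).trans_eq (by simp [D])
  have hD : ∀ x₁ x₂ x₃ x₄, D x₁ x₄ ≤ 2 * max (D x₁ x₂) (max (D x₂ x₃) (D x₃ x₄)) :=
    fun x₁ x₂ x₃ x₄ => by
      simpa only [D, mul_assoc, mul_inv_cancel_left] using
        hmul (x₁⁻¹ * x₂) (x₂⁻¹ * x₃) (x₃⁻¹ * x₄)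
  have htends : Tendsto (d 1) (𝓝 1) (𝓝 0) :=
    squeeze_zero (fun _ => @dist_nonneg G m _ _) hle (by simpa using NNReal.tendsto_coe.2 hσ)
  refine ⟨d, ⟨continuous_of_tendsto_dist_one (@dist_comm G m) (@dist_triangle G m) hleft htends,
    @dist_self G m, @dist_comm G m, @dist_nonneg G m, @dist_triangle G m, hleft⟩, fun g => ?_⟩
  simpa [D] using PseudoMetricSpace.le_two_mul_dist_ofPreNNDist D hself hcomm hD 1 g

end Metric

section CubeScale

theorem NNReal.eq_zero_of_forall_le_two_zpow {x : ℝ≥0} (h : ∀ k : ℤ, x ≤ 2 ^ k) : x = 0 := by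
  by_contra hx
  obtain ⟨k, hk, -⟩ := NNReal.exists_mem_Ioc_zpow hx one_lt_two
  exact (h k).not_gt hk

/-- For monotone `V`: `2 ^ k` for the least `k` with `x ∈ V k`, and `0` if `x` lies in every
`V k` or in none. -/
noncomputable def scaleWeight {X : Type*} (V : ℤ → Set X) (x : X) : ℝ≥0 :=
  sInf ((fun k : ℤ => (2 : ℝ≥0) ^ k) '' {k | x ∈ V k})

theorem scaleWeight_le_of_mem {X : Type*} {V : ℤ → Set X} {x : X} {k : ℤ} (h : x ∈ V k) :
    scaleWeight V x ≤ 2 ^ k :=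
  csInf_le (OrderBot.bddBelow _) ⟨k, h, rfl⟩

variable {G : Type*} [Group G] [TopologicalSpace G]

structure IsCubeScale (V : ℤ → Set G) : Prop where
  mem_nhds_one : ∀ k, V k ∈ 𝓝 (1 : G)
  inv_eq : ∀ k, (V k)⁻¹ = V k
  mul_mul_subset : ∀ k, V k * V k * V k ⊆ V (k + 1)
  exists_mem : ∀ g, ∃ k, g ∈ V k

namespace IsCubeScale

variable {V : ℤ → Set G}

theorem one_mem (hV : IsCubeScale V) (k : ℤ) : (1 : G) ∈ V k :=
  mem_of_mem_nhds (hV.mem_nhds_one k)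

theorem monotone (hV : IsCubeScale V) : Monotone V :=
  monotone_int_of_le_succ fun k g hg => hV.mul_mul_subset k <| by
    simpa using Set.mul_mem_mul (Set.mul_mem_mul hg (hV.one_mem k)) (hV.one_mem k)

theorem inv_mem_iff (hV : IsCubeScale V) {g : G} {k : ℤ} : g⁻¹ ∈ V k ↔ g ∈ V k := by
  rw [← Set.mem_inv, hV.inv_eq]

theorem two_zpow_succ_le_scaleWeight (hV : IsCubeScale V) {g : G} {k : ℤ} (h : g ∉ V k) :
    2 ^ (k + 1) ≤ scaleWeight V g := by
  obtain ⟨j, hj⟩ := hV.exists_mem g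
  refine le_csInf ⟨_, j, hj, rfl⟩ ?_
  rintro _ ⟨i, hi, rfl⟩
  have hki : k < i := lt_of_not_ge fun hik => h (hV.monotone hik hi)
  exact zpow_le_zpow_right₀ one_le_two hki

theorem mem_of_scaleWeight_lt (hV : IsCubeScale V) {g : G} {k : ℤ}
    (h : scaleWeight V g < 2 ^ (k + 1)) : g ∈ V k :=
  by_contra fun hg => (hV.two_zpow_succ_le_scaleWeight hg).not_gt h

theorem scaleWeight_one (hV : IsCubeScale V) : scaleWeight V 1 = 0 :=
  NNReal.eq_zero_of_forall_le_two_zpow fun k => scaleWeight_le_of_mem (hV.one_mem k)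

theorem scaleWeight_inv (hV : IsCubeScale V) (g : G) : scaleWeight V g⁻¹ = scaleWeight V g := by
  simp only [scaleWeight, hV.inv_mem_iff]

theorem scaleWeight_mul_mul_le (hV : IsCubeScale V) (a b c : G) :
    scaleWeight V (a * b * c) ≤
      2 * max (scaleWeight V a) (max (scaleWeight V b) (scaleWeight V c)) := by
  set M := max (scaleWeight V a) (max (scaleWeight V b) (scaleWeight V c))
  have hscale : ∀ k : ℤ, M < 2 ^ (k + 1) → scaleWeight V (a * b * c) ≤ 2 ^ (k + 1) := by
    intro k hk
    have hmem : ∀ g, scaleWeight V g ≤ M → g ∈ V k := fun g hg =>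
      hV.mem_of_scaleWeight_lt (hg.trans_lt hk)
    refine scaleWeight_le_of_mem (hV.mul_mul_subset k (Set.mul_mem_mul (Set.mul_mem_mul
      (hmem a (le_max_left _ _)) (hmem b ?_)) (hmem c ?_)))
    · exact (le_max_left _ _).trans (le_max_right _ _)
    · exact (le_max_right _ _).trans (le_max_right _ _)
  by_contra! hlt
  -- a power of `2` strictly between `M` and `scaleWeight V (a * b * c)` contradicts `hscale`
  obtain ⟨j, hj, hj'⟩ := NNReal.exists_mem_Ioc_zpow (x := scaleWeight V (a * b * c))
    (ne_bot_of_gt hlt) one_lt_two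
  rw [zpow_add_one₀ two_ne_zero] at hj'
  have hM : M < 2 ^ (j - 1 + 1) := by
    rw [sub_add_cancel]
    exact lt_of_mul_lt_mul_left' (hlt.trans_le (hj'.trans_eq (mul_comm _ _)))
  exact (hscale (j - 1) hM).not_gt (by rwa [sub_add_cancel])

theorem tendsto_scaleWeight (hV : IsCubeScale V) : Tendsto (scaleWeight V) (𝓝 1) (𝓝 0) := by
  refine tendsto_order.2 ⟨fun a ha => absurd ha zero_le.not_gt, fun ε hε => ?_⟩
  obtain ⟨k, hk, -⟩ := NNReal.exists_mem_Ioc_zpow hε.ne' one_lt_two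
  filter_upwards [hV.mem_nhds_one k] with g hg using (scaleWeight_le_of_mem hg).trans_lt hk

theorem exists_isContLeftInvPseudometric [ContinuousMul G] (hV : IsCubeScale V) :
    ∃ d : G → G → ℝ, IsContLeftInvPseudometric G d ∧ ∀ k g, g ∉ V k → (2 : ℝ) ^ k ≤ d 1 g := by
  obtain ⟨d, hd, hweight⟩ := exists_isContLeftInvPseudometric_of_weight (scaleWeight V)
    hV.scaleWeight_one hV.scaleWeight_inv hV.scaleWeight_mul_mul_le hV.tendsto_scaleWeight
  refine ⟨d, hd, fun k g hg => ?_⟩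
  have h := (NNReal.coe_le_coe.2 (hV.two_zpow_succ_le_scaleWeight hg)).trans (hweight g)
  rw [NNReal.coe_zpow, NNReal.coe_ofNat, zpow_add_one₀ two_ne_zero] at h
  linarith

theorem exists_subset_of_isCoarselyBounded [ContinuousMul G] (hV : IsCubeScale V) {A : Set G}
    (hA : IsCoarselyBounded G A) : ∃ k, A ⊆ V k := by
  obtain ⟨d, hd, hlarge⟩ := hV.exists_isContLeftInvPseudometric
  obtain ⟨M, hM⟩ := hA d hd
  rcases A.eq_empty_or_nonempty with rfl | ⟨a₀, ha₀⟩
  · exact ⟨0, Set.empty_subset _⟩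
  obtain ⟨n, hn⟩ := pow_unbounded_of_one_lt (d 1 a₀ + M) one_lt_two
  refine ⟨n, fun a ha => by_contra fun han => ?_⟩
  have h := hlarge n a han
  rw [zpow_natCast] at h
  linarith [hd.triangle 1 a₀ a, hM a₀ ha₀ a ha]

end IsCubeScale

end CubeScale

section Construction

variable {G : Type*} [Group G] [TopologicalSpace G] [IsTopologicalGroup G]

theorem exists_nhds_one_inv_eq_mul_mul_subset {S : Set G} (hS : S ∈ 𝓝 1) :
    ∃ T ∈ 𝓝 (1 : G), T⁻¹ = T ∧ T * T * T ⊆ S := by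
  obtain ⟨V, hV, -, -, hVS⟩ := exists_closed_nhds_one_inv_eq_mul_subset hS
  obtain ⟨T, hT, -, hTinv, hTV⟩ := exists_closed_nhds_one_inv_eq_mul_subset hV
  have hTsub : T ⊆ V := fun t ht => hTV (by simpa using Set.mul_mem_mul ht (mem_of_mem_nhds hT))
  exact ⟨T, hT, hTinv, (Set.mul_subset_mul hTV hTsub).trans hVS⟩

theorem exists_seq_nhds_one_inv_eq_mul_mul_subset {S : Set G} (hS : S ∈ 𝓝 1) (hSinv : S⁻¹ = S) :
    ∃ B : ℕ → Set G, B 0 = S ∧ (∀ n, B n ∈ 𝓝 1) ∧ (∀ n, (B n)⁻¹ = B n) ∧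
      ∀ n, B (n + 1) * B (n + 1) * B (n + 1) ⊆ B n := by
  choose T hT hTinv hTS using fun S : {S : Set G // S ∈ 𝓝 1} =>
    exists_nhds_one_inv_eq_mul_mul_subset S.2
  let next : {S : Set G // S ∈ 𝓝 1} → {S : Set G // S ∈ 𝓝 1} := fun S => ⟨T S, hT S⟩
  refine ⟨fun n => (next^[n] ⟨S, hS⟩).1, rfl, fun n => (next^[n] _).2, fun n => ?_, fun n => ?_⟩
  · cases n with
    | zero => exact hSinv
    | succ n => simpa only [Function.iterate_succ_apply'] using hTinv _
  · simpa only [Function.iterate_succ_apply'] using hTS _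

/-- Gluing an increasing sequence `W` with a decreasing sequence of cube roots of `W 0`. -/
theorem exists_isCubeScale_natCast_eq {W : ℕ → Set G} (hW : ∀ n, W n ∈ 𝓝 1)
    (hWinv : ∀ n, (W n)⁻¹ = W n) (hWmul : ∀ n, W n * W n * W n ⊆ W (n + 1))
    (hWcover : ∀ g, ∃ n, g ∈ W n) :
    ∃ V : ℤ → Set G, IsCubeScale V ∧ ∀ n : ℕ, V n = W n := by
  obtain ⟨B, hB0, hB, hBinv, hBmul⟩ := exists_seq_nhds_one_inv_eq_mul_mul_subset (hW 0) (hWinv 0)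
  let V : ℤ → Set G
    | (n : ℕ) => W n
    | Int.negSucc n => B (n + 1)
  have hVneg : ∀ n : ℕ, V (-n) = B n
    | 0 => hB0.symm
    | n + 1 => rfl
  refine ⟨V, ⟨fun k => ?_, fun k => ?_, fun k => ?_, fun g => ?_⟩, fun n => rfl⟩
  · rcases k with n | n
    exacts [hW n, hB (n + 1)]
  · rcases k with n | n
    exacts [hWinv n, hBinv (n + 1)]
  · rcases k with n | n
    · exact hWmul n
    · rw [show Int.negSucc n + 1 = -(n : ℤ) by omega, hVneg]
      exact hBmul n
  · obtain ⟨n, hn⟩ := hWcover g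
    exact ⟨n, hn⟩

theorem exists_isCubeScale_of_exhaustion {U : ℕ → Set G} (hopen : ∀ n, IsOpen (U n))
    (hmono : ∀ n, U n ⊆ U (n + 1)) (hmul : ∀ n, ∀ u ∈ U n, ∀ v ∈ U n, u * v ∈ U (n + 1))
    (hcover : ∀ g : G, ∃ n, g ∈ U n) :
    ∃ V : ℤ → Set G, IsCubeScale V ∧ ∀ k, ∃ n, V k ⊆ U n := by
  have hUmono : Monotone U := monotone_nat_of_le_succ hmono
  obtain ⟨n₀, h₀⟩ := hcover 1
  let S : ℕ → Set G := fun m => U m ∩ (U m)⁻¹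
  have hSmono : Monotone S := fun m m' h => Set.inter_subset_inter (hUmono h) (by
    simpa using hUmono h)
  have hSmul : ∀ m, S m * S m ⊆ S (m + 1) := by
    rintro m _ ⟨u, ⟨hu, hu'⟩, v, ⟨hv, hv'⟩, rfl⟩
    refine ⟨hmul m u hu v hv, ?_⟩
    rw [Set.mem_inv, mul_inv_rev]
    exact hmul m _ hv' _ hu'
  have hWmul : ∀ n, S (n₀ + 2 * n) * S (n₀ + 2 * n) * S (n₀ + 2 * n) ⊆ S (n₀ + 2 * (n + 1)) :=
    fun n => (Set.mul_subset_mul (hSmul _) (hSmono (Nat.le_succ _))).trans (hSmul _)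
  obtain ⟨V, hV, hVW⟩ := exists_isCubeScale_natCast_eq (W := fun n => S (n₀ + 2 * n))
    (fun n => ((hopen _).inter (hopen _).inv).mem_nhds
      ⟨hUmono (by omega) h₀, by simpa using hUmono (by omega : n₀ ≤ n₀ + 2 * n) h₀⟩)
    (fun n => by simp only [S, Set.inter_inv, inv_inv, Set.inter_comm]) hWmul
    (fun g => by
      obtain ⟨p, hp⟩ := hcover g
      obtain ⟨q, hq⟩ := hcover g⁻¹
      exact ⟨p + q, hUmono (by omega) hp, hUmono (by omega : q ≤ _) hq⟩)
  refine ⟨V, hV, fun k => ⟨n₀ + 2 * k.toNat, (hV.monotone (Int.self_le_toNat k)).trans ?_⟩⟩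
  rw [hVW]
  exact Set.inter_subset_left

end Construction

/-- A subset `A` of a topological group is coarsely bounded if and only if for every
increasing exhaustion of `G` by open sets `U n` with `U n * U n ⊆ U (n+1)`,
`A` is contained in some `U n`. -/
theorem isCoarselyBounded_iff_exhaustion {G : Type*} [Group G] [TopologicalSpace G]
    [IsTopologicalGroup G] (A : Set G) :
    IsCoarselyBounded G A ↔
      ∀ U : ℕ → Set G, (∀ n, IsOpen (U n)) → (∀ n, U n ⊆ U (n + 1)) →
        (∀ n, ∀ u ∈ U n, ∀ v ∈ U n, u * v ∈ U (n + 1)) →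
        (∀ g : G, ∃ n, g ∈ U n) → ∃ n, A ⊆ U n := by
  refine ⟨fun hA U hopen hmono hmul hcover => ?_, isCoarselyBounded_of_forall_exhaustion⟩
  obtain ⟨V, hV, hVU⟩ := exists_isCubeScale_of_exhaustion hopen hmono hmul hcover
  obtain ⟨k, hk⟩ := hV.exists_subset_of_isCoarselyBounded hA
  obtain ⟨n, hn⟩ := hVU k
  exact ⟨n, hk.trans hn⟩
end

section
/- Let G be a topological group generated by a symmetric, open, coarsely bounded identity neighborhood S. Then G admits a geometry; more precisely: (i) for every continuous left-invariant pseudometric d' on G there exists M > 0 with d'(g, h) ≤ M · d_S(g, h) for all g, h ∈ G, where d_S is the word metric with respect to S; and (ii) there exists a continuous left-invariant pseudometric \widehat{d} on G and constants L > 0, K ≥ 0 such that \widehat{d}(g, h) ≤ L·d_S(g, h) + K and d_S(g, h) ≤ L·\widehat{d}(g, h) + K for all g, h ∈ G, and \widehat{d} dominates every continuous left-invariant pseudometric on G up to additive and multiplicative constants. -/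
open Pointwise

/-! Coarse boundedness of `S` bounds every continuous left-invariant pseudometric by a multiple
of the word metric `d_S`. Conversely, choose open symmetric identity neighbourhoods
`S = V 0 ⊇ V 1 ⊇ ⋯` with `V (n + 1) ^ 3 ⊆ V n`, and let `ρ z = 2⁻¹ ^ n` for the least `n`
with `z ∉ V n`. The largest left-invariant pseudometric `d̂` in which each `s ∈ S` has length
at most `ρ s` is continuous because `ρ → 0` at `1`, and `d̂ ≤ d_S` because `ρ ≤ 1`. By
Kakutani's inequality `ρ (s₁ ⋯ sₙ) ≤ 2 ∑ ρ sᵢ`, every word in `S` of weight `< 1/2` has its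
product in `S`; cutting an arbitrary word into such pieces gives `d_S ≤ 4 d̂ + 1`. -/

open scoped NNReal Topology
open Filter

section WordLength

variable {G : Type*} [Group G] {S : Set G}

lemma exists_list_prod_eq (hsymm : S⁻¹ = S) (hgen : Subgroup.closure S = ⊤) (g : G) :
    ∃ l : List G, (∀ s ∈ l, s ∈ S) ∧ l.prod = g := by
  apply Submonoid.exists_list_of_mem_closure
  have hg : g ∈ (Subgroup.closure S).toSubmonoid := by rw [hgen]; trivial
  rwa [Subgroup.closure_toSubmonoid, hsymm, Set.union_self] at hg

lemma wordLength_le_length {g : G} {l : List G} (hl : ∀ s ∈ l, s ∈ S) (hprod : l.prod = g) :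
    wordLength S g ≤ l.length :=
  Nat.sInf_le ⟨l, rfl, hl, hprod⟩

lemma exists_length_eq_wordLength (hsymm : S⁻¹ = S) (hgen : Subgroup.closure S = ⊤) (g : G) :
    ∃ l : List G, l.length = wordLength S g ∧ (∀ s ∈ l, s ∈ S) ∧ l.prod = g := by
  obtain ⟨l, hl, hprod⟩ := exists_list_prod_eq hsymm hgen g
  exact Nat.sInf_mem (s := {n | ∃ l : List G, l.length = n ∧ (∀ s ∈ l, s ∈ S) ∧ l.prod = g})
    ⟨l.length, l, rfl, hl, hprod⟩

lemma wordLength_le_one {s : G} (hs : s ∈ S) : wordLength S s ≤ 1 :=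
  wordLength_le_length (l := [s]) (by simpa using hs) (by simp)

lemma wordLength_mul_le (hsymm : S⁻¹ = S) (hgen : Subgroup.closure S = ⊤) (a b : G) :
    wordLength S (a * b) ≤ wordLength S a + wordLength S b := by
  obtain ⟨la, hla, hSa, rfl⟩ := exists_length_eq_wordLength hsymm hgen a
  obtain ⟨lb, hlb, hSb, rfl⟩ := exists_length_eq_wordLength hsymm hgen b
  rw [← hla, ← hlb, ← List.length_append, ← List.prod_append]
  exact wordLength_le_length (by simpa [or_imp, forall_and] using ⟨hSa, hSb⟩) rfl

end WordLength

namespace IsContLeftInvPseudometric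

variable {G : Type*} [Group G] [TopologicalSpace G] {d : G → G → ℝ}

lemma eq_apply_one_inv_mul (hd : IsContLeftInvPseudometric G d) (g h : G) :
    d g h = d 1 (g⁻¹ * h) := by
  simpa using (hd.left_inv g⁻¹ g h).symm

lemma apply_one_prod_le (hd : IsContLeftInvPseudometric G d) {S : Set G} {M : ℝ}
    (hM : ∀ s ∈ S, d 1 s ≤ M) (l : List G) (hl : ∀ s ∈ l, s ∈ S) :
    d 1 l.prod ≤ M * l.length := by
  induction l with
  | nil => simp [hd.self]
  | cons s t ih =>
    have hst : d 1 (s * t.prod) ≤ d 1 s + d 1 t.prod := by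
      simpa [hd.eq_apply_one_inv_mul s] using hd.triangle 1 s (s * t.prod)
    rw [List.prod_cons, List.length_cons, Nat.cast_succ]
    linarith [hM s (hl s List.mem_cons_self), ih fun x hx => hl x (List.mem_cons_of_mem s hx)]

lemma le_mul_wordLength (hd : IsContLeftInvPseudometric G d) {S : Set G} (hsymm : S⁻¹ = S)
    (hgen : Subgroup.closure S = ⊤) {M : ℝ} (hM : ∀ s ∈ S, d 1 s ≤ M) (g h : G) :
    d g h ≤ M * wordLength S (g⁻¹ * h) := by
  obtain ⟨l, hlen, hl, hprod⟩ := exists_length_eq_wordLength hsymm hgen (g⁻¹ * h)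
  rw [hd.eq_apply_one_inv_mul, ← hlen, ← hprod]
  exact hd.apply_one_prod_le hM l hl

end IsContLeftInvPseudometric

lemma IsCoarselyBounded.exists_pos_le_mul_wordLength {G : Type*} [Group G] [TopologicalSpace G]
    {S : Set G} (hCB : IsCoarselyBounded G S) (hsymm : S⁻¹ = S) (h1S : (1 : G) ∈ S)
    (hgen : Subgroup.closure S = ⊤) {d : G → G → ℝ} (hd : IsContLeftInvPseudometric G d) :
    ∃ M : ℝ, 0 < M ∧ ∀ g h : G, d g h ≤ M * wordLength S (g⁻¹ * h) := by
  obtain ⟨M, hM⟩ := hCB d hd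
  refine ⟨|M| + 1, by positivity, hd.le_mul_wordLength hsymm hgen fun s hs => ?_⟩
  linarith [hM 1 h1S s hs, le_abs_self M]

noncomputable def weightedWordDist {G : Type*} [Group G] (S : Set G) (w : G → ℝ≥0) (g h : G) :
    ℝ :=
  ⨅ l : {l : List G // (∀ s ∈ l, s ∈ S) ∧ l.prod = g⁻¹ * h}, ((l.1.map w).sum : ℝ)

section WeightedWordDist

variable {G : Type*} [Group G] {S : Set G} {w : G → ℝ≥0}

lemma weightedWordDist_le_sum {g h : G} (l : List G) (hl : ∀ s ∈ l, s ∈ S)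
    (hprod : l.prod = g⁻¹ * h) : weightedWordDist S w g h ≤ (l.map w).sum :=
  ciInf_le ⟨0, by rintro _ ⟨l, rfl⟩; positivity⟩ (⟨l, hl, hprod⟩ : {l : List G // _})

lemma weightedWordDist_nonneg (g h : G) : 0 ≤ weightedWordDist S w g h :=
  Real.iInf_nonneg fun _ => by positivity

lemma exists_sum_lt_weightedWordDist_add (hsymm : S⁻¹ = S) (hgen : Subgroup.closure S = ⊤)
    (g h : G) {ε : ℝ} (hε : 0 < ε) : ∃ l : List G, (∀ s ∈ l, s ∈ S) ∧ l.prod = g⁻¹ * h ∧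
      ((l.map w).sum : ℝ) < weightedWordDist S w g h + ε := by
  obtain ⟨l, hl, hprod⟩ := exists_list_prod_eq hsymm hgen (g⁻¹ * h)
  have : Nonempty {l : List G // (∀ s ∈ l, s ∈ S) ∧ l.prod = g⁻¹ * h} := ⟨⟨l, hl, hprod⟩⟩
  have hlt : weightedWordDist S w g h < weightedWordDist S w g h + ε := lt_add_of_pos_right _ hε
  obtain ⟨⟨l, hl, hprod⟩, hlt⟩ := exists_lt_of_ciInf_lt hlt
  exact ⟨l, hl, hprod, hlt⟩

lemma weightedWordDist_self (g : G) : weightedWordDist S w g g = 0 := by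
  refine le_antisymm ?_ (weightedWordDist_nonneg g g)
  simpa using weightedWordDist_le_sum (S := S) (w := w) (g := g) (h := g) [] (by simp) (by simp)

lemma weightedWordDist_mul_left (a g h : G) :
    weightedWordDist S w (a * g) (a * h) = weightedWordDist S w g h := by
  unfold weightedWordDist
  rw [show (a * g)⁻¹ * (a * h) = g⁻¹ * h by group]

lemma weightedWordDist_triangle (hsymm : S⁻¹ = S) (hgen : Subgroup.closure S = ⊤) (x y z : G) :
    weightedWordDist S w x z ≤ weightedWordDist S w x y + weightedWordDist S w y z := by
  refine le_of_forall_pos_lt_add fun ε hε => ?_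
  obtain ⟨l₁, hl₁, hprod₁, hlt₁⟩ :=
    exists_sum_lt_weightedWordDist_add (w := w) hsymm hgen x y (half_pos hε)
  obtain ⟨l₂, hl₂, hprod₂, hlt₂⟩ :=
    exists_sum_lt_weightedWordDist_add (w := w) hsymm hgen y z (half_pos hε)
  have hle := weightedWordDist_le_sum (w := w) (g := x) (h := z) (l₁ ++ l₂)
    (by simpa [or_imp, forall_and] using ⟨hl₁, hl₂⟩) (by simp [hprod₁, hprod₂, mul_assoc])
  simp only [List.map_append, List.sum_append, NNReal.coe_add] at hle
  linarith

lemma weightedWordDist_comm (hsymm : S⁻¹ = S) (hgen : Subgroup.closure S = ⊤)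
    (hw : ∀ s, w s⁻¹ = w s) (g h : G) : weightedWordDist S w g h = weightedWordDist S w h g := by
  suffices key : ∀ g h : G, weightedWordDist S w h g ≤ weightedWordDist S w g h from
    le_antisymm (key h g) (key g h)
  intro g h
  obtain ⟨l, hl, hprod⟩ := exists_list_prod_eq hsymm hgen (g⁻¹ * h)
  have : Nonempty {l : List G // (∀ s ∈ l, s ∈ S) ∧ l.prod = g⁻¹ * h} := ⟨⟨l, hl, hprod⟩⟩
  refine le_ciInf fun ⟨l, hl, hprod⟩ => ?_
  have hl' : ∀ s ∈ (l.map (·⁻¹)).reverse, s ∈ S := by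
    intro s hs
    obtain ⟨t, ht, rfl⟩ := List.mem_map.1 (List.mem_reverse.1 hs)
    rw [← hsymm]
    simpa using hl t ht
  have hprod' : (l.map (·⁻¹)).reverse.prod = h⁻¹ * g := by
    rw [← List.prod_inv_reverse, hprod]; group
  simpa [Function.comp_def, hw] using weightedWordDist_le_sum (w := w) _ hl' hprod'

lemma weightedWordDist_le_wordLength (hsymm : S⁻¹ = S) (hgen : Subgroup.closure S = ⊤)
    (hw : ∀ s ∈ S, w s ≤ 1) (g h : G) :
    weightedWordDist S w g h ≤ wordLength S (g⁻¹ * h) := by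
  obtain ⟨l, hlen, hl, hprod⟩ := exists_length_eq_wordLength hsymm hgen (g⁻¹ * h)
  have hsum : (l.map w).sum ≤ l.length := by
    simpa using List.sum_le_card_nsmul (l.map w) 1 (by simpa using fun s hs => hw s (hl s hs))
  rw [← hlen]
  exact (weightedWordDist_le_sum l hl hprod).trans (by exact_mod_cast hsum)

lemma wordLength_prod_le_four_mul_sum (hsymm : S⁻¹ = S) (hgen : Subgroup.closure S = ⊤)
    (hsmall : ∀ l : List G, (∀ s ∈ l, s ∈ S) → ((l.map w).sum : ℝ) < 1 / 2 → l.prod ∈ S)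
    (l : List G) (hl : ∀ s ∈ l, s ∈ S) :
    (wordLength S l.prod : ℝ) ≤ 4 * (l.map w).sum + 1 := by
  -- `p` is the current block of a greedy cutting of the word; it is closed by the first letter
  -- that brings its weight to `1/2`, and then its product has word length `≤ 2`.
  suffices key : ∀ p : List G, (∀ s ∈ p, s ∈ S) → ((p.map w).sum : ℝ) < 1 / 2 →
      (wordLength S (p ++ l).prod : ℝ) ≤ 4 * ((p ++ l).map w).sum + 1 by
    simpa using key [] (by simp) (by simp)
  induction l with
  | nil =>
    intro p hp hpw
    have hp1 : (wordLength S p.prod : ℝ) ≤ 1 := by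
      exact_mod_cast wordLength_le_one (hsmall p hp hpw)
    simp only [List.append_nil]
    linarith [(p.map w).sum.coe_nonneg]
  | cons s t ih =>
    intro p hp hpw
    have hs : s ∈ S := hl s List.mem_cons_self
    have ht : ∀ x ∈ t, x ∈ S := fun x hx => hl x (List.mem_cons_of_mem s hx)
    have hps : ∀ x ∈ p ++ [s], x ∈ S := by simpa [or_imp, forall_and] using ⟨hp, hs⟩
    by_cases hpsw : (((p ++ [s]).map w).sum : ℝ) < 1 / 2
    · simpa using ih ht (p ++ [s]) hps hpsw
    · have hlen : wordLength S (p ++ s :: t).prod ≤ wordLength S p.prod + wordLength S s +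
          wordLength S t.prod := by
        rw [List.prod_append, List.prod_cons, ← mul_assoc]
        exact (wordLength_mul_le hsymm hgen _ _).trans
          (by gcongr; exact wordLength_mul_le hsymm hgen _ _)
      have hp1 := wordLength_le_one (hsmall p hp hpw)
      have hs1 := wordLength_le_one hs
      have ht' := ih ht [] (by simp) (by simp)
      simp only [List.nil_append] at ht'
      simp only [List.map_append, List.map_cons, List.map_nil, List.sum_append, List.sum_cons,
        List.sum_nil, NNReal.coe_add, add_zero, not_lt] at hpsw ⊢
      have hblock : (wordLength S (p ++ s :: t).prod : ℝ) ≤ 1 + 1 + wordLength S t.prod := by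
        exact_mod_cast hlen.trans (by omega)
      linarith

lemma wordLength_le_four_mul_weightedWordDist (hsymm : S⁻¹ = S) (hgen : Subgroup.closure S = ⊤)
    (hsmall : ∀ l : List G, (∀ s ∈ l, s ∈ S) → ((l.map w).sum : ℝ) < 1 / 2 → l.prod ∈ S)
    (g h : G) : (wordLength S (g⁻¹ * h) : ℝ) ≤ 4 * weightedWordDist S w g h + 1 := by
  refine le_of_forall_pos_lt_add fun ε hε => ?_
  obtain ⟨l, hl, hprod, hlt⟩ :=
    exists_sum_lt_weightedWordDist_add (w := w) hsymm hgen g h (by positivity : 0 < ε / 4)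
  have := wordLength_prod_le_four_mul_sum hsymm hgen hsmall l hl
  rw [hprod] at this
  linarith

variable [TopologicalSpace G] [IsTopologicalGroup G]

lemma continuous_weightedWordDist (hsymm : S⁻¹ = S) (hgen : Subgroup.closure S = ⊤)
    (hw : ∀ s, w s⁻¹ = w s) (hS : S ∈ 𝓝 1) (hw0 : Tendsto w (𝓝 1) (𝓝 0)) :
    Continuous fun p : G × G => weightedWordDist S w p.1 p.2 := by
  set D := weightedWordDist S w
  have hnear : ∀ x, Tendsto (fun y => D x y) (𝓝 x) (𝓝 0) := by
    intro x
    have hx : Tendsto (fun y => x⁻¹ * y) (𝓝 x) (𝓝 1) := by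
      simpa using ((continuous_const_mul x⁻¹).tendsto x)
    refine squeeze_zero' (Eventually.of_forall fun y => weightedWordDist_nonneg x y) ?_
      ((NNReal.tendsto_coe.2 hw0).comp hx)
    filter_upwards [hx hS] with y hy
    simpa using weightedWordDist_le_sum (w := w) [x⁻¹ * y] (by simpa using hy) (by simp)
  have hdiff : ∀ x y a b : G, |D a b - D x y| ≤ D x a + D y b := by
    intro x y a b
    have htri := weightedWordDist_triangle (w := w) hsymm hgen
    have hcomm := weightedWordDist_comm (w := w) hsymm hgen hw
    rw [abs_sub_le_iff]
    constructor
    · linarith [htri a x b, htri x y b, hcomm a x]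
    · linarith [htri x a y, htri a b y, hcomm b y]
  rw [continuous_iff_continuousAt]
  rintro ⟨x, y⟩
  rw [ContinuousAt, tendsto_iff_dist_tendsto_zero]
  refine squeeze_zero (fun _ => dist_nonneg) (fun q => hdiff x y q.1 q.2) ?_
  simpa using ((hnear x).comp (continuous_fst.tendsto (x, y))).add
    ((hnear y).comp (continuous_snd.tendsto (x, y)))

lemma isContLeftInvPseudometric_weightedWordDist (hsymm : S⁻¹ = S)
    (hgen : Subgroup.closure S = ⊤) (hw : ∀ s, w s⁻¹ = w s) (hS : S ∈ 𝓝 1)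
    (hw0 : Tendsto w (𝓝 1) (𝓝 0)) :
    IsContLeftInvPseudometric G (weightedWordDist S w) where
  continuous := continuous_weightedWordDist hsymm hgen hw hS hw0
  self := weightedWordDist_self
  symm := weightedWordDist_comm hsymm hgen hw
  nonneg := weightedWordDist_nonneg
  triangle := weightedWordDist_triangle hsymm hgen
  left_inv := weightedWordDist_mul_left

end WeightedWordDist

/-- A word is a path from `1` to its product for the largest pseudometric below
`x, y ↦ w (x⁻¹ * y)`, which `PseudoMetricSpace.le_two_mul_dist_ofPreNNDist` compares with `w`. -/
lemma weight_prod_le_two_mul_sum {G : Type*} [Group G] {w : G → ℝ≥0} (h1 : w 1 = 0)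
    (hinv : ∀ z, w z⁻¹ = w z) (hmul : ∀ a b c, w (a * b * c) ≤ 2 * max (w a) (max (w b) (w c)))
    (l : List G) : w l.prod ≤ 2 * (l.map w).sum := by
  let d : G → G → ℝ≥0 := fun x y => w (x⁻¹ * y)
  have hself : ∀ x, d x x = 0 := by simp [d, h1]
  have hcomm : ∀ x y, d x y = d y x := fun x y => by
    simp only [d]; rw [← hinv]; group
  let _ := PseudoMetricSpace.ofPreNNDist d hself hcomm
  have hchain : ∀ (l : List G) (x : G), dist x (x * l.prod) ≤ (l.map w).sum := by
    intro l
    induction l with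
    | nil => simp
    | cons s t ih =>
      intro x
      have hs : dist x (x * s) ≤ w s := by
        simpa [d] using PseudoMetricSpace.dist_ofPreNNDist_le d hself hcomm x (x * s)
      calc dist x (x * (s :: t).prod) ≤ dist x (x * s) + dist (x * s) (x * s * t.prod) := by
            rw [List.prod_cons, ← mul_assoc]; exact dist_triangle _ _ _
        _ ≤ w s + (t.map w).sum := add_le_add hs (ih _)
        _ = ((s :: t).map w).sum := by simp
  have key := PseudoMetricSpace.le_two_mul_dist_ofPreNNDist d hself hcomm (fun x₁ x₂ x₃ x₄ => by
    simpa [d, mul_assoc] using hmul (x₁⁻¹ * x₂) (x₂⁻¹ * x₃) (x₃⁻¹ * x₄)) 1 l.prod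
  have := hchain l 1
  rw [one_mul] at this
  rw [← NNReal.coe_le_coe, NNReal.coe_mul, NNReal.coe_two]
  simp only [d, inv_one, one_mul] at key
  linarith

structure IsCubeChain {G : Type*} [Group G] (V : ℕ → Set G) : Prop where
  one_mem : ∀ n, (1 : G) ∈ V n
  inv_eq : ∀ n, (V n)⁻¹ = V n
  cube_subset : ∀ n, V (n + 1) * V (n + 1) * V (n + 1) ⊆ V n

lemma IsCubeChain.antitone {G : Type*} [Group G] {V : ℕ → Set G} (hV : IsCubeChain V) :
    Antitone V :=
  antitone_nat_of_succ_le fun n x hx => hV.cube_subset n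
    (by simpa using Set.mul_mem_mul (Set.mul_mem_mul (hV.one_mem _) (hV.one_mem _)) hx)

/-- `2⁻¹ ^ n` for the least `n` with `z ∉ V n`, and `0` (empty supremum) if `z` lies in every
`V n`. -/
noncomputable def bkWeight {G : Type*} (V : ℕ → Set G) (z : G) : ℝ≥0 :=
  ⨆ n : {n : ℕ // z ∉ V n}, 2⁻¹ ^ (n : ℕ)

section BirkhoffKakutani

variable {G : Type*} {V : ℕ → Set G}

lemma bkWeight_le_one (z : G) : bkWeight V z ≤ 1 :=
  ciSup_le' fun _ => pow_le_one₀ (by norm_num) (by norm_num)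

lemma pow_le_bkWeight {z : G} {n : ℕ} (hz : z ∉ V n) : 2⁻¹ ^ n ≤ bkWeight V z :=
  le_ciSup (f := fun n : {n : ℕ // z ∉ V n} => (2⁻¹ : ℝ≥0) ^ (n : ℕ))
    ⟨1, by rintro _ ⟨n, rfl⟩; exact pow_le_one₀ (by norm_num) (by norm_num)⟩ ⟨n, hz⟩

lemma mem_of_bkWeight_lt {z : G} {n : ℕ} (h : bkWeight V z < 2⁻¹ ^ n) : z ∈ V n := by
  by_contra hz
  exact (pow_le_bkWeight hz).not_gt h

lemma bkWeight_lt_of_mem (hV : Antitone V) {z : G} {n : ℕ} (hz : z ∈ V n) :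
    bkWeight V z < 2⁻¹ ^ n := by
  refine (ciSup_le' fun m => ?_).trans_lt
    (pow_lt_pow_right_of_lt_one₀ (by norm_num) (by norm_num) n.lt_succ_self)
  refine pow_le_pow_right_of_le_one' (by norm_num) ?_
  by_contra! hm
  exact m.2 (hV (Nat.le_of_lt_succ hm) hz)

lemma bkWeight_eq_zero {z : G} (hz : ∀ n, z ∈ V n) : bkWeight V z = 0 := by
  have : IsEmpty {n : ℕ // z ∉ V n} := ⟨fun n => n.2 (hz n)⟩
  exact ciSup_of_empty _

lemma tendsto_bkWeight [TopologicalSpace G] [One G] (hV : Antitone V) (hnhds : ∀ n, V n ∈ 𝓝 1) :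
    Tendsto (bkWeight V) (𝓝 1) (𝓝 0) := by
  refine tendsto_order.2 ⟨fun a ha => (not_lt_zero ha).elim, fun ε hε => ?_⟩
  obtain ⟨n, hn⟩ := exists_pow_lt_of_lt_one hε (by norm_num : (2⁻¹ : ℝ≥0) < 1)
  filter_upwards [hnhds n] with z hz
  exact (bkWeight_lt_of_mem hV hz).trans hn

variable [Group G]

lemma bkWeight_inv (hV : ∀ n, (V n)⁻¹ = V n) (z : G) : bkWeight V z⁻¹ = bkWeight V z := by
  have hmem : ∀ n, z⁻¹ ∈ V n ↔ z ∈ V n := fun n => by rw [← Set.mem_inv, hV]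
  exact (Equiv.subtypeEquivRight fun n => (hmem n).not).iSup_congr fun _ => rfl

lemma bkWeight_mul_mul_le (hV : IsCubeChain V) (a b c : G) :
    bkWeight V (a * b * c) ≤ 2 * max (bkWeight V a) (max (bkWeight V b) (bkWeight V c)) := by
  refine ciSup_le' fun ⟨n, hn⟩ => ?_
  by_contra! hlt
  have hmax : max (bkWeight V a) (max (bkWeight V b) (bkWeight V c)) < 2⁻¹ ^ (n + 1) := by
    rw [← NNReal.coe_lt_coe] at hlt ⊢
    push_cast at hlt ⊢
    rw [pow_succ]
    linarith
  simp only [max_lt_iff] at hmax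
  obtain ⟨ha, hb, hc⟩ := hmax
  exact hn (hV.cube_subset n (Set.mul_mem_mul (Set.mul_mem_mul (mem_of_bkWeight_lt ha)
    (mem_of_bkWeight_lt hb)) (mem_of_bkWeight_lt hc)))

lemma IsCubeChain.prod_mem_zero_of_sum_lt (hV : IsCubeChain V) {l : List G}
    (hl : ((l.map (bkWeight V)).sum : ℝ) < 1 / 2) : l.prod ∈ V 0 := by
  refine mem_of_bkWeight_lt ((weight_prod_le_two_mul_sum (bkWeight_eq_zero hV.one_mem)
    (bkWeight_inv hV.inv_eq) (bkWeight_mul_mul_le hV) l).trans_lt ?_)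
  rw [← NNReal.coe_lt_coe, NNReal.coe_mul, NNReal.coe_two, pow_zero, NNReal.coe_one]
  linarith

end BirkhoffKakutani

lemma exists_isOpen_inv_eq_cube_subset {G : Type*} [Group G] [TopologicalSpace G]
    [IsTopologicalGroup G] {U : Set G} (hU : U ∈ 𝓝 1) :
    ∃ W : Set G, IsOpen W ∧ (1 : G) ∈ W ∧ W⁻¹ = W ∧ W * W * W ⊆ U := by
  obtain ⟨W, hW, hWU⟩ := exists_nhds_one_split4 hU
  obtain ⟨O, hOW, hO, h1O⟩ := mem_nhds_iff.1 hW
  refine ⟨O ∩ O⁻¹, hO.inter hO.inv, ⟨h1O, by simpa using h1O⟩, by simp [Set.inter_comm], ?_⟩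
  rintro _ ⟨_, ⟨a, ha, b, hb, rfl⟩, c, hc, rfl⟩
  simpa using hWU (hOW ha.1) (hOW hb.1) (hOW hc.1) (hOW h1O)

lemma exists_isCubeChain {G : Type*} [Group G] [TopologicalSpace G] [IsTopologicalGroup G]
    {S : Set G} (hS : IsOpen S) (h1S : (1 : G) ∈ S) (hsymm : S⁻¹ = S) :
    ∃ V : ℕ → Set G, IsCubeChain V ∧ V 0 = S ∧ ∀ n, IsOpen (V n) := by
  let T := {U : Set G // IsOpen U ∧ (1 : G) ∈ U ∧ U⁻¹ = U}
  have step : ∀ U : T, ∃ W : T, W.1 * W.1 * W.1 ⊆ U.1 := fun U => by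
    obtain ⟨W, hWo, hW1, hWinv, hWU⟩ :=
      exists_isOpen_inv_eq_cube_subset (U.2.1.mem_nhds U.2.2.1)
    exact ⟨⟨W, hWo, hW1, hWinv⟩, hWU⟩
  choose next hnext using step
  let V : ℕ → T := fun n => next^[n] ⟨S, hS, h1S, hsymm⟩
  refine ⟨fun n => (V n).1, ⟨fun n => (V n).2.2.1, fun n => (V n).2.2.2, fun n => ?_⟩, rfl,
    fun n => (V n).2.1⟩
  simpa [V, Function.iterate_succ_apply'] using hnext (V n)

/-- If `G` is generated by a symmetric, open, coarsely bounded identity neighborhood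
`S`, then `G` admits a geometry: every continuous left-invariant pseudometric is
dominated by the word metric `d_S`, and there is a continuous left-invariant
pseudometric quasi-isometric to `d_S` which dominates every continuous
left-invariant pseudometric up to constants. -/
theorem admitsGeometry_of_symm_open_cb_generating {G : Type*} [Group G] [TopologicalSpace G]
    [IsTopologicalGroup G]
    (S : Set G) (hsymm : S⁻¹ = S) (hSopen : IsOpen S) (h1S : (1 : G) ∈ S)
    (hCB : IsCoarselyBounded G S) (hgen : Subgroup.closure S = ⊤) :
    (∀ d' : G → G → ℝ, IsContLeftInvPseudometric G d' →
      ∃ M : ℝ, 0 < M ∧ ∀ g h : G, d' g h ≤ M * (wordLength S (g⁻¹ * h) : ℝ)) ∧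
    ∃ dhat : G → G → ℝ, IsContLeftInvPseudometric G dhat ∧
      (∃ L K : ℝ, 0 < L ∧ 0 ≤ K ∧
        (∀ g h : G, dhat g h ≤ L * (wordLength S (g⁻¹ * h) : ℝ) + K) ∧
        (∀ g h : G, (wordLength S (g⁻¹ * h) : ℝ) ≤ L * dhat g h + K)) ∧
      (∀ d' : G → G → ℝ, IsContLeftInvPseudometric G d' →
        ∃ L K : ℝ, 0 < L ∧ 0 ≤ K ∧ ∀ g h : G, d' g h ≤ L * dhat g h + K) := by
  obtain ⟨V, hV, hV0, hVopen⟩ := exists_isCubeChain hSopen h1S hsymm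
  have hdhat : IsContLeftInvPseudometric G (weightedWordDist S (bkWeight V)) :=
    isContLeftInvPseudometric_weightedWordDist hsymm hgen (bkWeight_inv hV.inv_eq)
      (hSopen.mem_nhds h1S)
      (tendsto_bkWeight hV.antitone fun n => (hVopen n).mem_nhds (hV.one_mem n))
  have hupper (g h : G) : weightedWordDist S (bkWeight V) g h ≤ wordLength S (g⁻¹ * h) :=
    weightedWordDist_le_wordLength hsymm hgen (fun s _ => bkWeight_le_one s) g h
  have hlower (g h : G) :
      (wordLength S (g⁻¹ * h) : ℝ) ≤ 4 * weightedWordDist S (bkWeight V) g h + 1 :=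
    wordLength_le_four_mul_weightedWordDist hsymm hgen
      (fun _ _ hl => hV0 ▸ hV.prod_mem_zero_of_sum_lt hl) g h
  have hword (d : G → G → ℝ) (hd : IsContLeftInvPseudometric G d) :=
    hCB.exists_pos_le_mul_wordLength hsymm h1S hgen hd
  refine ⟨hword, weightedWordDist S (bkWeight V), hdhat,
    ⟨4, 1, by norm_num, by norm_num, fun g h => ?_, hlower⟩, fun d hd => ?_⟩
  · linarith [hupper g h, (wordLength S (g⁻¹ * h)).cast_nonneg (α := ℝ)]
  · obtain ⟨M, hM, hdM⟩ := hword d hd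
    refine ⟨4 * M, M, by positivity, hM.le, fun g h => ?_⟩
    nlinarith [hdM g h, hlower g h]
end
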